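/- arXiv:2604.23365 — 2 statements merged into one kernel-verified Lean document; each statement's English description precedes it below -/
import Mathlib

section
/- Let H1 be an r-uniform hypergraph (r ≥ 2) on n vertices, and let H be obtained from H1 by attaching at each vertex i one pendant hyperedge consisting of i together with r−1 new vertices (all new vertices distinct). If (β, z) is an eigenpair of the signless Laplacian Q(H1) and μ ∈ ℂ with μ ≠ 1 satisfies (μ − β − 1)(μ − 1)^{r−1} − 1 = 0, then μ is an eigenvalue of Q(H); an eigenvector is given by assigning z_i to each original vertex i and z_i/(μ − 1) to each of the r−1 new vertices of the pendant hyperedge at i. -/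
open Finset
open scoped Classical

/-- The adjacency hypermatrix entry of an `r`-uniform hypergraph with hyperedge set `E`:
the `(j, f 0, …, f (r-2))`-entry is `1/(r-1)!` when the indices are pairwise distinct and
form a hyperedge, and `0` otherwise. -/
noncomputable def adjEntry (r : ℕ) {V : Type*} [Fintype V] [DecidableEq V]
    (E : Finset (Finset V)) (j : V) (f : Fin (r - 1) → V) : ℂ :=
  if Function.Injective f ∧ (∀ i, f i ≠ j) ∧ insert j (Finset.image f Finset.univ) ∈ E then
    1 / ((r - 1).factorial : ℂ)
  else 0

/-- The degree of a vertex: the number of hyperedges containing it. -/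
def hdegree {V : Type*} [DecidableEq V] (E : Finset (Finset V)) (v : V) : ℕ :=
  (E.filter fun e => v ∈ e).card

/-- The Laplacian hypermatrix entry `L = D - A`. -/
noncomputable def lapEntry (r : ℕ) {V : Type*} [Fintype V] [DecidableEq V]
    (E : Finset (Finset V)) (j : V) (f : Fin (r - 1) → V) : ℂ :=
  (if ∀ i, f i = j then (hdegree E j : ℂ) else 0) - adjEntry r E j f

/-- The signless Laplacian hypermatrix entry `Q = D + A`. -/
noncomputable def signlessEntry (r : ℕ) {V : Type*} [Fintype V] [DecidableEq V]
    (E : Finset (Finset V)) (j : V) (f : Fin (r - 1) → V) : ℂ :=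
  (if ∀ i, f i = j then (hdegree E j : ℂ) else 0) + adjEntry r E j f

/-- `(lam, x)` is an eigenpair of the order-`r` hypermatrix `T` (represented by its
first index and the remaining `r-1` indices). -/
def IsEigenpair {V : Type*} [Fintype V] (r : ℕ)
    (T : V → (Fin (r - 1) → V) → ℂ) (lam : ℂ) (x : V → ℂ) : Prop :=
  x ≠ 0 ∧ ∀ j, ∑ f : Fin (r - 1) → V, T j f * ∏ i, x (f i) = lam * x j ^ (r - 1)

/-- A vector is non-main if the sum over all `(r-1)`-subsets `S` of the vertex set of
`∏_{i ∈ S} x i` vanishes. -/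
def IsNonMainVec {V : Type*} [Fintype V] [DecidableEq V] (r : ℕ) (x : V → ℂ) : Prop :=
  ∑ S ∈ Finset.univ.powersetCard (r - 1), ∏ i ∈ S, x i = 0

/-- An eigenvalue is non-main if it has some non-main eigenvector. -/
def IsNonMainEigenvalue {V : Type*} [Fintype V] [DecidableEq V] (r : ℕ)
    (T : V → (Fin (r - 1) → V) → ℂ) (lam : ℂ) : Prop :=
  ∃ x, IsEigenpair r T lam x ∧ IsNonMainVec r x

/-- The hypergraph obtained from `H₁` (on `Fin n`) by attaching at each vertex `i` one
pendant hyperedge consisting of `i` together with `r - 1` new vertices `(i, j)`. -/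
def pendant1Edges (r n : ℕ) (E : Finset (Finset (Fin n))) :
    Finset (Finset (Fin n ⊕ Fin n × Fin (r - 1))) :=
  E.image (fun e => e.map ⟨Sum.inl, Sum.inl_injective⟩) ∪
  Finset.univ.image (fun i : Fin n =>
    insert (Sum.inl i) (Finset.univ.image fun j : Fin (r - 1) => Sum.inr (i, j)))

/-! ### Auxiliary lemmas -/

lemma sum_inj_image {V : Type*} [Fintype V] [DecidableEq V] (m : ℕ) (S : Finset V)
    (hS : S.card = m) (x : V → ℂ) :
    ∑ f ∈ Finset.univ.filter
        (fun f : Fin m → V => Function.Injective f ∧ Finset.image f Finset.univ = S),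
      ∏ i, x (f i) = (m.factorial : ℂ) * ∏ v ∈ S, x v := by
  have hcard : Fintype.card S = m := by simpa using hS
  have key : ∑ _σ ∈ (Finset.univ : Finset (Fin m ≃ S)), ((∏ v ∈ S, x v) : ℂ)
      = ∑ f ∈ Finset.univ.filter
        (fun f : Fin m → V => Function.Injective f ∧ Finset.image f Finset.univ = S),
      ∏ i, x (f i) := by
    refine Finset.sum_bij (fun σ _ => fun k => (σ k : V)) ?_ ?_ ?_ ?_
    · intro σ _
      simp only [Finset.mem_filter, Finset.mem_univ, true_and]
      constructor
      · intro a b hab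
        exact σ.injective (Subtype.ext hab)
      · ext v
        simp only [Finset.mem_image, Finset.mem_univ, true_and]
        constructor
        · rintro ⟨k, rfl⟩; exact (σ k).2
        · intro hv; exact ⟨σ.symm ⟨v, hv⟩, by simp⟩
    · intro σ₁ _ σ₂ _ h
      ext k
      exact congrFun h k
    · intro f hf
      simp only [Finset.mem_filter, Finset.mem_univ, true_and] at hf
      obtain ⟨hinj, himg⟩ := hf
      have hmem : ∀ k, f k ∈ S := fun k => himg ▸ Finset.mem_image_of_mem f (Finset.mem_univ k)
      have hbij : Function.Bijective (fun k => (⟨f k, hmem k⟩ : S)) := by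
        rw [Fintype.bijective_iff_injective_and_card]
        exact ⟨fun a b hab => hinj (congrArg Subtype.val hab), by simp [hcard]⟩
      exact ⟨Equiv.ofBijective _ hbij, Finset.mem_univ _, rfl⟩
    · intro σ _
      rw [← Finset.prod_coe_sort S x, ← Equiv.prod_comp σ (fun s : S => x s)]
  rw [← key, Finset.sum_const, Finset.card_univ, Fintype.card_equiv
    ((Fintype.equivFinOfCardEq hcard).symm), Fintype.card_fin, nsmul_eq_mul]

lemma sum_adj {V : Type*} [Fintype V] [DecidableEq V] {r : ℕ} (E : Finset (Finset V))
    (hu : ∀ e ∈ E, e.card = r) (j : V) (x : V → ℂ) :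
    ∑ f : Fin (r-1) → V, adjEntry r E j f * ∏ i, x (f i)
      = ∑ e ∈ E.filter (fun e => j ∈ e), ∏ v ∈ e.erase j, x v := by
  classical
  have h1 : ∀ f : Fin (r-1) → V, adjEntry r E j f * ∏ i, x (f i)
      = if Function.Injective f ∧ (∀ i, f i ≠ j) ∧ insert j (Finset.image f Finset.univ) ∈ E
        then (1 / ((r-1).factorial : ℂ)) * ∏ i, x (f i) else 0 := by
    intro f
    unfold adjEntry
    split <;> simp
  simp_rw [h1]
  rw [Finset.sum_ite, Finset.sum_const_zero, add_zero]
  rw [← Finset.sum_fiberwise_of_maps_to (g := fun f : Fin (r-1) → V =>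
      insert j (Finset.image f Finset.univ)) (t := E.filter (fun e => j ∈ e))
      (by intro f hf
          simp only [Finset.mem_filter, Finset.mem_univ, true_and] at hf
          exact Finset.mem_filter.2 ⟨hf.2.2, Finset.mem_insert_self _ _⟩)]
  refine Finset.sum_congr rfl ?_
  intro e he
  simp only [Finset.mem_filter] at he
  obtain ⟨heE, hje⟩ := he
  have hset : ((Finset.univ.filter (fun f : Fin (r-1) → V =>
        Function.Injective f ∧ (∀ i, f i ≠ j) ∧ insert j (Finset.image f Finset.univ) ∈ E)).filter
        (fun f => insert j (Finset.image f Finset.univ) = e))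
      = Finset.univ.filter (fun f : Fin (r-1) → V =>
        Function.Injective f ∧ Finset.image f Finset.univ = e.erase j) := by
    ext f
    simp only [Finset.mem_filter, Finset.mem_univ, true_and]
    constructor
    · rintro ⟨⟨hinj, hne, _⟩, heq⟩
      refine ⟨hinj, ?_⟩
      have hj : j ∉ Finset.image f Finset.univ := by
        simp only [Finset.mem_image, Finset.mem_univ, true_and]
        rintro ⟨i, hi⟩; exact hne i hi
      rw [← heq, Finset.erase_insert hj]
    · rintro ⟨hinj, himg⟩
      have hne : ∀ i, f i ≠ j := by
        intro i hji
        have : f i ∈ e.erase j := himg ▸ Finset.mem_image_of_mem f (Finset.mem_univ i)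
        exact (Finset.mem_erase.1 this).1 (by rw [hji])
      have : insert j (Finset.image f Finset.univ) = e := by
        rw [himg, Finset.insert_erase hje]
      exact ⟨⟨hinj, hne, this ▸ heE⟩, this⟩
  rw [hset, ← Finset.mul_sum,
    sum_inj_image (r-1) (e.erase j)
      (by rw [Finset.card_erase_of_mem hje, hu e heE]) x]
  have : ((r-1).factorial : ℂ) ≠ 0 := Nat.cast_ne_zero.2 (Nat.factorial_ne_zero _)
  field_simp

lemma sum_signless {V : Type*} [Fintype V] [DecidableEq V] {r : ℕ}
    (E : Finset (Finset V)) (hu : ∀ e ∈ E, e.card = r) (j : V) (x : V → ℂ) :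
    ∑ f : Fin (r-1) → V, signlessEntry r E j f * ∏ i, x (f i)
      = (hdegree E j : ℂ) * x j ^ (r - 1)
        + ∑ e ∈ E.filter (fun e => j ∈ e), ∏ v ∈ e.erase j, x v := by
  unfold signlessEntry
  simp_rw [add_mul, Finset.sum_add_distrib, sum_adj E hu j x]
  congr 1
  have h1 : ∀ f : Fin (r-1) → V,
      (if ∀ i, f i = j then (hdegree E j : ℂ) else 0) * ∏ i, x (f i)
      = if f = (fun _ => j) then (hdegree E j : ℂ) * ∏ i, x (f i) else 0 := by
    intro f
    have : (∀ i, f i = j) ↔ f = fun _ => j := ⟨fun h => funext h, fun h i => congrFun h i⟩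
    simp only [this]
    split <;> simp
  simp_rw [h1]
  rw [Finset.sum_ite_eq' Finset.univ (fun _ => j)
    (fun f => (hdegree E j : ℂ) * ∏ i, x (f i))]
  simp [Finset.prod_const]

/-! ### Structure of the corona hypergraph -/

def emap (r n : ℕ) (e : Finset (Fin n)) : Finset (Fin n ⊕ Fin n × Fin (r - 1)) :=
  e.map ⟨Sum.inl, Sum.inl_injective⟩

def pend (r n : ℕ) (i : Fin n) : Finset (Fin n ⊕ Fin n × Fin (r - 1)) :=
  insert (Sum.inl i) (Finset.univ.image fun j : Fin (r - 1) => Sum.inr (i, j))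

lemma pendant1Edges_eq (r n : ℕ) (E : Finset (Finset (Fin n))) :
    pendant1Edges r n E = E.image (emap r n) ∪ Finset.univ.image (pend r n) := rfl

lemma mem_emap_inl {r n : ℕ} {e : Finset (Fin n)} {k : Fin n} :
    Sum.inl k ∈ emap r n e ↔ k ∈ e := by simp [emap]

lemma not_mem_emap_inr {r n : ℕ} {e : Finset (Fin n)} (p : Fin n × Fin (r-1)) :
    Sum.inr p ∉ emap r n e := by simp [emap]

lemma mem_pend_inl {r n : ℕ} {i k : Fin n} : Sum.inl k ∈ pend r n i ↔ k = i := by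
  simp [pend]

lemma mem_pend_inr {r n : ℕ} {i a : Fin n} {b : Fin (r-1)} :
    Sum.inr (a, b) ∈ pend r n i ↔ a = i := by
  simp [pend, eq_comm]

lemma inl_not_mem_image {r n : ℕ} (i k : Fin n) :
    Sum.inl k ∉ (Finset.univ.image fun j : Fin (r - 1) =>
      (Sum.inr (i, j) : Fin n ⊕ Fin n × Fin (r-1))) := by
  simp

lemma inr_inj {r n : ℕ} (i : Fin n) :
    Function.Injective (fun j : Fin (r-1) => (Sum.inr (i, j) : Fin n ⊕ Fin n × Fin (r-1))) := by
  intro a b h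
  simpa using h

lemma card_pend {r n : ℕ} (hr : 1 ≤ r) (i : Fin n) : (pend r n i).card = r := by
  rw [pend, Finset.card_insert_of_notMem (inl_not_mem_image i i),
    Finset.card_image_of_injective _ (inr_inj i)]
  simp; omega

lemma pend_ne_emap {r n : ℕ} (hr : 2 ≤ r) (i : Fin n) (e : Finset (Fin n)) :
    pend r n i ≠ emap r n e := by
  intro h
  have : (Sum.inr (i, ⟨0, by omega⟩) : Fin n ⊕ Fin n × Fin (r-1)) ∈ pend r n i :=
    mem_pend_inr.2 rfl
  rw [h] at this
  exact not_mem_emap_inr _ this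

lemma emap_injective {r n : ℕ} : Function.Injective (emap r n) :=
  Finset.map_injective _

lemma filter_inl (r n : ℕ) (E : Finset (Finset (Fin n))) (i : Fin n) :
    (pendant1Edges r n E).filter (fun e => Sum.inl i ∈ e)
      = (E.filter (fun e => i ∈ e)).image (emap r n) ∪ {pend r n i} := by
  rw [pendant1Edges_eq, Finset.filter_union, Finset.filter_image, Finset.filter_image]
  congr 1
  · congr 1
    ext e
    simp [mem_emap_inl]
  · have h : Finset.univ.filter (fun k : Fin n => Sum.inl i ∈ pend r n k) = {i} := by
      ext k
      simp [mem_pend_inl, eq_comm]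
    rw [h, Finset.image_singleton]

lemma filter_inr (r n : ℕ) (E : Finset (Finset (Fin n)))
    (i : Fin n) (k : Fin (r-1)) :
    (pendant1Edges r n E).filter (fun e => Sum.inr (i, k) ∈ e) = {pend r n i} := by
  rw [pendant1Edges_eq, Finset.filter_union, Finset.filter_image, Finset.filter_image]
  have h1 : E.filter (fun e => Sum.inr (i,k) ∈ emap r n e) = ∅ := by
    ext e; simp [not_mem_emap_inr]
  have h2 : Finset.univ.filter (fun a : Fin n => Sum.inr (i,k) ∈ pend r n a) = {i} := by
    ext a
    simp [mem_pend_inr, eq_comm]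
  rw [h1, h2, Finset.image_singleton, Finset.image_empty, Finset.empty_union]

lemma edges_card (r n : ℕ) (hr : 2 ≤ r) (E : Finset (Finset (Fin n)))
    (hu : ∀ e ∈ E, e.card = r) :
    ∀ e ∈ pendant1Edges r n E, e.card = r := by
  intro e he
  rw [pendant1Edges_eq, Finset.mem_union] at he
  rcases he with he | he
  · obtain ⟨e', he', rfl⟩ := Finset.mem_image.1 he
    rw [emap, Finset.card_map]
    exact hu e' he'
  · obtain ⟨i, _, rfl⟩ := Finset.mem_image.1 he
    exact card_pend (by omega) i

lemma hdeg_inl {r n : ℕ} (hr : 2 ≤ r) (E : Finset (Finset (Fin n))) (i : Fin n) :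
    hdegree (pendant1Edges r n E) (Sum.inl i) = hdegree E i + 1 := by
  unfold hdegree
  rw [filter_inl, Finset.card_union_of_disjoint, Finset.card_image_of_injective _ emap_injective,
    Finset.card_singleton]
  rw [Finset.disjoint_singleton_right]
  intro h
  obtain ⟨e, _, he⟩ := Finset.mem_image.1 h
  exact pend_ne_emap hr i e he.symm

lemma hdeg_inr {r n : ℕ} (E : Finset (Finset (Fin n))) (i : Fin n) (k : Fin (r-1)) :
    hdegree (pendant1Edges r n E) (Sum.inr (i, k)) = 1 := by
  unfold hdegree
  rw [filter_inr, Finset.card_singleton]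

lemma prod_erase_emap {r n : ℕ} (e : Finset (Fin n)) (i : Fin n) (z : Fin n → ℂ)
    (x : Fin n ⊕ Fin n × Fin (r-1) → ℂ) (hx : ∀ v, x (Sum.inl v) = z v) :
    ∏ v ∈ (emap r n e).erase (Sum.inl i), x v = ∏ v ∈ e.erase i, z v := by
  rw [emap, show (Sum.inl i : Fin n ⊕ Fin n × Fin (r-1))
      = (⟨Sum.inl, Sum.inl_injective⟩ : Fin n ↪ Fin n ⊕ Fin n × Fin (r-1)) i from rfl,
    ← Finset.map_erase, Finset.prod_map]
  exact Finset.prod_congr rfl fun v _ => hx v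

lemma prod_erase_pend_inl {r n : ℕ} (i : Fin n) (c : ℂ)
    (x : Fin n ⊕ Fin n × Fin (r-1) → ℂ) (hx : ∀ j : Fin (r-1), x (Sum.inr (i, j)) = c) :
    ∏ v ∈ (pend r n i).erase (Sum.inl i), x v = c ^ (r - 1) := by
  rw [pend, Finset.erase_insert (inl_not_mem_image i i),
    Finset.prod_image (fun a _ b _ h => inr_inj i h)]
  simp [hx]

lemma prod_erase_pend_inr {r n : ℕ} (i : Fin n) (k : Fin (r-1)) (zi c : ℂ)
    (x : Fin n ⊕ Fin n × Fin (r-1) → ℂ) (hxl : x (Sum.inl i) = zi)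
    (hx : ∀ j : Fin (r-1), x (Sum.inr (i, j)) = c) :
    ∏ v ∈ (pend r n i).erase (Sum.inr (i, k)), x v = zi * c ^ (r - 1 - 1) := by
  rw [pend, Finset.erase_insert_of_ne (by simp),
    show ((Finset.univ.image fun j : Fin (r-1) =>
        (Sum.inr (i, j) : Fin n ⊕ Fin n × Fin (r-1))).erase
        (Sum.inr (i, k))) = (Finset.univ.erase k).image fun j => Sum.inr (i, j) from
      (Finset.image_erase (inr_inj i) _ k).symm,
    Finset.prod_insert (by simp), hxl,
    Finset.prod_image (fun a _ b _ h => inr_inj i h)]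
  have hc : ∀ j ∈ Finset.univ.erase k, x (Sum.inr (i, j)) = c := fun j _ => hx _
  rw [Finset.prod_congr rfl hc, Finset.prod_const, Finset.card_erase_of_mem (Finset.mem_univ k),
    Finset.card_univ, Fintype.card_fin]

/-- signless Laplacian eigenvalues of the corona `H₁ ∘ (r-1)K₁`. -/
theorem stmt11 (r n : ℕ) (hr : 2 ≤ r)
    (E : Finset (Finset (Fin n))) (hu : ∀ e ∈ E, e.card = r)
    (beta mu : ℂ) (z : Fin n → ℂ)
    (hz : IsEigenpair r (signlessEntry r E) beta z)
    (hmu1 : mu ≠ 1)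
    (hmu : (mu - beta - 1) * (mu - 1) ^ (r - 1) - 1 = 0) :
    IsEigenpair r (signlessEntry r (pendant1Edges r n E)) mu
      (Sum.elim z fun p => z p.1 / (mu - 1)) := by
  classical
  obtain ⟨hz0, hzeq⟩ := hz
  have hmu1' : mu - 1 ≠ 0 := sub_ne_zero_of_ne hmu1
  set x : Fin n ⊕ Fin n × Fin (r-1) → ℂ := Sum.elim z fun p => z p.1 / (mu - 1) with hxdef
  have hu' := edges_card r n hr E hu
  have hxl : ∀ v, x (Sum.inl v) = z v := fun v => rfl
  constructor
  · intro h
    apply hz0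
    funext i
    have := congrFun h (Sum.inl i)
    simpa [hxl] using this
  · intro j
    rw [sum_signless _ hu']
    cases j with
    | inl i =>
      have hxr : ∀ jj : Fin (r-1), x (Sum.inr (i, jj)) = z i / (mu - 1) := fun jj => rfl
      have hdisj : Disjoint ((E.filter (fun e => i ∈ e)).image (emap r n)) {pend r n i} := by
        rw [Finset.disjoint_singleton_right]
        intro h
        obtain ⟨e, _, he⟩ := Finset.mem_image.1 h
        exact pend_ne_emap hr i e he.symm
      rw [hdeg_inl hr, filter_inl, Finset.sum_union hdisj,
        Finset.sum_image (fun a _ b _ h => emap_injective h), Finset.sum_singleton,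
        prod_erase_pend_inl i (z i / (mu-1)) x hxr,
        Finset.sum_congr rfl (fun e _ => prod_erase_emap e i z x hxl)]
      have hEi : (hdegree E i : ℂ) * z i ^ (r-1)
          + ∑ e ∈ E.filter (fun e => i ∈ e), ∏ v ∈ e.erase i, z v = beta * z i ^ (r-1) := by
        rw [← sum_signless E hu i z]
        exact hzeq i
      have hS : ∑ e ∈ E.filter (fun e => i ∈ e), ∏ v ∈ e.erase i, z v
          = beta * z i ^ (r-1) - (hdegree E i : ℂ) * z i ^ (r-1) := by
        linear_combination hEi
      rw [hS, hxl i]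
      have hkey : (z i / (mu - 1)) ^ (r-1) = (mu - beta - 1) * z i ^ (r-1) := by
        rw [div_pow]
        have hpow : (mu - 1) ^ (r-1) ≠ 0 := pow_ne_zero _ hmu1'
        field_simp
        linear_combination (-(z i ^ (r-1))) * hmu
      rw [hkey]
      push_cast
      ring
    | inr p =>
      obtain ⟨i, k⟩ := p
      have hxr : ∀ jj : Fin (r-1), x (Sum.inr (i, jj)) = z i / (mu - 1) := fun jj => rfl
      rw [hdeg_inr, filter_inr r n E i k, Finset.sum_singleton,
        prod_erase_pend_inr i k (z i) (z i / (mu-1)) x rfl hxr]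
      have hx2 : x (Sum.inr (i,k)) = z i / (mu - 1) := rfl
      rw [hx2]
      have h2 : (z i / (mu-1)) ^ (r-1) = (z i / (mu-1)) ^ (r-1-1) * (z i / (mu-1)) := by
        rw [← pow_succ]
        congr 1
        omega
      have h1 : z i * (z i / (mu-1)) ^ (r-1-1) = (mu - 1) * (z i / (mu-1)) ^ (r-1) := by
        rw [h2]
        field_simp
      rw [h1]
      push_cast
      ring
end

section
/- Let H1 and H2 be r-uniform hypergraphs (r ≥ 2) of orders n1 and n2 with n2 ≥ r − 1, and let H = H1 ∘ H2 be their r-uniform corona. Write C = binom(n2−1, r−2). (a) If (θ, x) is an eigenpair of the Laplacian L(H1) and μ ∈ ℂ with μ ≠ C satisfies (μ − θ − binom(n2, r−1))·(C − μ)^{r−1} + binom(n2, r−1)·C^{r−1} = 0, then μ is an eigenvalue of L(H); an eigenvector assigns x_i to each vertex u_i of H1 and C·x_i/(C − μ) to every vertex of the i-th copy of H2. (b) If φ is a non-main eigenvalue of L(H2), then φ + C is an eigenvalue of L(H): for a non-main eigenvector z of L(H2) for φ and any i ∈ {1,…,n1}, the vector equal to z on the i-th copy of H2 and 0 elsewhere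 is an eigenvector of L(H) for φ + C. -/
open Finset
open scoped Classical

/-- The `r`-uniform corona `H₁ ∘ H₂`: `H₁` lives on `Fin n₁` (embedded via `Sum.inl`),
the `i`-th copy of `H₂` lives on `{i} × Fin n₂` (embedded via `Sum.inr`), and for each
`i` every `r`-element subset of the `i`-th copy together with `u_i` that contains `u_i`
is added as a hyperedge. -/
noncomputable def coronaEdges (r n₁ n₂ : ℕ) (E₁ : Finset (Finset (Fin n₁)))
    (E₂ : Finset (Finset (Fin n₂))) : Finset (Finset (Fin n₁ ⊕ Fin n₁ × Fin n₂)) :=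
  E₁.image (fun e => e.map ⟨Sum.inl, Sum.inl_injective⟩) ∪
  (Finset.univ ×ˢ E₂).image
    (fun p : Fin n₁ × Finset (Fin n₂) =>
      p.2.image (fun v => Sum.inr (p.1, v))) ∪
  (Finset.univ ×ˢ (Finset.univ.powersetCard (r - 1) : Finset (Finset (Fin n₂)))).image
    (fun p : Fin n₁ × Finset (Fin n₂) =>
      insert (Sum.inl p.1) (p.2.image (fun v => Sum.inr (p.1, v))))


section Aux

variable {V : Type*} [Fintype V] [DecidableEq V]

lemma card_inj_onto {k : ℕ} (S : Finset V) (hS : S.card = k) :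
    ((Finset.univ : Finset (Fin k → V)).filter
      (fun f => Function.Injective f ∧ Finset.image f Finset.univ = S)).card = k.factorial := by
  have h1 : ((Finset.univ : Finset (Fin k → V)).filter
      (fun f => Function.Injective f ∧ Finset.image f Finset.univ = S)).card
      = Fintype.card (Fin k ↪ ↥S) := by
    rw [← Fintype.card_coe]
    refine Fintype.card_congr ?_
    refine
      { toFun := fun f => ⟨fun i => ⟨f.1 i, ?_⟩,
          fun a b hab => (mem_filter.1 f.2).2.1 (congrArg Subtype.val hab)⟩
        invFun := fun g => ⟨fun i => (g i : V), ?_⟩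
        left_inv := fun f => by ext i; rfl
        right_inv := fun g => by ext i; rfl }
    · have h := (mem_filter.1 f.2).2.2
      have : f.1 i ∈ Finset.image f.1 Finset.univ := mem_image_of_mem _ (mem_univ i)
      rwa [h] at this
    · rw [mem_filter]
      refine ⟨mem_univ _, fun a b hab => g.injective (Subtype.val_injective hab), ?_⟩
      apply eq_of_subset_of_card_le
      · intro v hv
        simp only [mem_image, mem_univ, true_and] at hv
        obtain ⟨i, rfl⟩ := hv
        exact (g i).2
      · rw [hS, Finset.card_image_of_injective _
          (fun a b hab => g.injective (Subtype.val_injective hab))]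
        simp
  rw [h1, Fintype.card_embedding_eq]
  simp [hS, Nat.descFactorial_self]

lemma adj_sum (r : ℕ) (E : Finset (Finset V)) (hu : ∀ e ∈ E, e.card = r) (j : V) (x : V → ℂ) :
    ∑ f : Fin (r-1) → V, adjEntry r E j f * ∏ i, x (f i)
    = ∑ e ∈ E.filter (fun e => j ∈ e), ∏ v ∈ e.erase j, x v := by
  have key : ∀ f : Fin (r-1) → V,
      adjEntry r E j f * ∏ i, x (f i) =
      if (Function.Injective f ∧ (∀ i, f i ≠ j) ∧ insert j (Finset.image f Finset.univ) ∈ E)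
      then (1 / ((r - 1).factorial : ℂ)) * ∏ i, x (f i) else 0 := by
    intro f; rw [adjEntry]; split <;> simp
  rw [Finset.sum_congr rfl (fun f _ => key f), Finset.sum_ite, Finset.sum_const_zero, add_zero]
  rw [← Finset.sum_fiberwise_of_maps_to
    (g := fun f : Fin (r-1) → V => insert j (Finset.image f Finset.univ))
    (t := E.filter (fun e => j ∈ e))
    (fun f hf => by
      rw [mem_filter]
      exact ⟨(Finset.mem_filter.1 hf).2.2.2, Finset.mem_insert_self _ _⟩)]
  refine Finset.sum_congr rfl (fun e he => ?_)
  have hje : j ∈ e := (mem_filter.1 he).2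
  have hee : e ∈ E := (mem_filter.1 he).1
  have hcard : (e.erase j).card = r - 1 := by
    rw [card_erase_of_mem hje, hu e hee]
  have hset : ((Finset.univ : Finset (Fin (r-1) → V)).filter
        (fun f => Function.Injective f ∧ (∀ i, f i ≠ j) ∧
          insert j (Finset.image f Finset.univ) ∈ E)).filter
        (fun f => insert j (Finset.image f Finset.univ) = e)
      = (Finset.univ : Finset (Fin (r-1) → V)).filter
        (fun f => Function.Injective f ∧ Finset.image f Finset.univ = e.erase j) := by
    ext f
    simp only [mem_filter, mem_univ, true_and]
    constructor
    · rintro ⟨⟨hinj, hne, _⟩, heq⟩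
      refine ⟨hinj, eq_of_subset_of_card_le ?_ ?_⟩
      · intro v hv
        simp only [mem_image, mem_univ, true_and] at hv
        obtain ⟨i, rfl⟩ := hv
        refine mem_erase.2 ⟨hne i, ?_⟩
        rw [← heq]; exact mem_insert_of_mem (mem_image_of_mem _ (mem_univ i))
      · rw [hcard, Finset.card_image_of_injective _ hinj, Finset.card_univ, Fintype.card_fin]
    · rintro ⟨hinj, him⟩
      have hne : ∀ i, f i ≠ j := by
        intro i hi
        have : f i ∈ e.erase j := him ▸ mem_image_of_mem _ (mem_univ i)
        exact (mem_erase.1 this).1 hi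
      have : insert j (Finset.image f Finset.univ) = e := by
        rw [him, insert_erase hje]
      exact ⟨⟨hinj, hne, this ▸ hee⟩, this⟩
  rw [hset]
  have hterm : ∀ f ∈ (Finset.univ : Finset (Fin (r-1) → V)).filter
        (fun f => Function.Injective f ∧ Finset.image f Finset.univ = e.erase j),
      (1 / ((r - 1).factorial : ℂ)) * ∏ i, x (f i)
      = (1 / ((r - 1).factorial : ℂ)) * ∏ v ∈ e.erase j, x v := by
    intro f hf
    obtain ⟨_, hinj, him⟩ := mem_filter.1 hf
    rw [← him, Finset.prod_image (fun a _ b _ hab => hinj hab)]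
  rw [Finset.sum_congr rfl hterm, Finset.sum_const, card_inj_onto _ hcard, nsmul_eq_mul]
  have hfac : ((r-1).factorial : ℂ) ≠ 0 := by
    exact_mod_cast Nat.factorial_ne_zero _
  field_simp

lemma lap_sum (r : ℕ) (E : Finset (Finset V)) (hu : ∀ e ∈ E, e.card = r) (j : V) (x : V → ℂ) :
    ∑ f : Fin (r-1) → V, lapEntry r E j f * ∏ i, x (f i)
    = (hdegree E j : ℂ) * x j ^ (r-1)
      - ∑ e ∈ E.filter (fun e => j ∈ e), ∏ v ∈ e.erase j, x v := by
  simp only [lapEntry, sub_mul, Finset.sum_sub_distrib]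
  rw [adj_sum r E hu j x]
  congr 1
  have key : ∀ f : Fin (r-1) → V,
      (if ∀ i, f i = j then (hdegree E j : ℂ) else 0) * ∏ i, x (f i)
      = if f = (fun _ => j) then (hdegree E j : ℂ) * x j ^ (r-1) else 0 := by
    intro f
    by_cases h : f = fun _ => j
    · subst h
      simp [Finset.prod_const]
    · rw [if_neg h, if_neg, zero_mul]
      intro hall; exact h (funext hall)
  rw [Finset.sum_congr rfl (fun f _ => key f), Finset.sum_ite_eq' Finset.univ]
  simp

end Aux

section Corona

variable (r n₁ n₂ : ℕ) (E₁ : Finset (Finset (Fin n₁))) (E₂ : Finset (Finset (Fin n₂)))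

lemma inj_inr (i : Fin n₁) :
    Function.Injective (fun v : Fin n₂ => (Sum.inr (i, v) : Fin n₁ ⊕ Fin n₁ × Fin n₂)) := by
  intro a b hab
  simpa using hab

lemma corona_uniform (hr : 2 ≤ r) (hu₁ : ∀ e ∈ E₁, e.card = r) (hu₂ : ∀ e ∈ E₂, e.card = r) :
    ∀ e ∈ coronaEdges r n₁ n₂ E₁ E₂, e.card = r := by
  intro e he
  rw [coronaEdges, Finset.mem_union, Finset.mem_union] at he
  rcases he with (he | he) | he
  · obtain ⟨e₁, he₁, rfl⟩ := Finset.mem_image.1 he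
    rw [Finset.card_map]; exact hu₁ e₁ he₁
  · obtain ⟨q, hq, rfl⟩ := Finset.mem_image.1 he
    rw [Finset.card_image_of_injective _ (inj_inr n₁ n₂ q.1)]
    exact hu₂ q.2 (Finset.mem_product.1 hq).2
  · obtain ⟨q, hq, rfl⟩ := Finset.mem_image.1 he
    have hS : q.2.card = r - 1 := (Finset.mem_powersetCard.1 (Finset.mem_product.1 hq).2).2
    rw [Finset.card_insert_of_notMem (by simp),
      Finset.card_image_of_injective _ (inj_inr n₁ n₂ q.1), hS]
    omega

lemma corona_decomp {M : Type*} [AddCommMonoid M] (hr : 2 ≤ r)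
    (hu₁ : ∀ e ∈ E₁, e.card = r) (hu₂ : ∀ e ∈ E₂, e.card = r)
    (j : Fin n₁ ⊕ Fin n₁ × Fin n₂) (g : Finset (Fin n₁ ⊕ Fin n₁ × Fin n₂) → M) :
    ∑ e ∈ (coronaEdges r n₁ n₂ E₁ E₂).filter (fun e => j ∈ e), g e
    = (∑ e ∈ E₁, if j ∈ e.map ⟨Sum.inl, Sum.inl_injective⟩
        then g (e.map ⟨Sum.inl, Sum.inl_injective⟩) else 0)
    + (∑ i : Fin n₁, ∑ e ∈ E₂, if j ∈ e.image (fun v => Sum.inr (i, v))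
        then g (e.image (fun v => Sum.inr (i, v))) else 0)
    + (∑ i : Fin n₁, ∑ S ∈ (Finset.univ.powersetCard (r - 1) : Finset (Finset (Fin n₂))),
        if j ∈ insert (Sum.inl i) (S.image (fun v => Sum.inr (i, v)))
        then g (insert (Sum.inl i) (S.image (fun v => Sum.inr (i, v)))) else 0) := by
  classical
  set m : Finset (Fin n₁) → Finset (Fin n₁ ⊕ Fin n₁ × Fin n₂) :=
    fun e => e.map ⟨Sum.inl, Sum.inl_injective⟩ with hm
  set F : Fin n₁ × Finset (Fin n₂) → Finset (Fin n₁ ⊕ Fin n₁ × Fin n₂) :=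
    fun p => p.2.image (fun v => Sum.inr (p.1, v)) with hF
  set G : Fin n₁ × Finset (Fin n₂) → Finset (Fin n₁ ⊕ Fin n₁ × Fin n₂) :=
    fun p => insert (Sum.inl p.1) (p.2.image (fun v => Sum.inr (p.1, v))) with hG
  have hrpos : 0 < r := lt_of_lt_of_le two_pos hr
  have hr1 : 1 ≤ r - 1 := by omega
  have hAB : Disjoint (E₁.image m) ((Finset.univ ×ˢ E₂).image F) := by
    rw [Finset.disjoint_left]
    rintro e he he'
    obtain ⟨e₁, he₁, rfl⟩ := Finset.mem_image.1 he
    obtain ⟨q, hq, hqe⟩ := Finset.mem_image.1 he'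
    have hne : e₁.Nonempty := Finset.card_pos.1 (by rw [hu₁ e₁ he₁]; exact hrpos)
    obtain ⟨a, ha⟩ := hne
    have : (Sum.inl a : Fin n₁ ⊕ Fin n₁ × Fin n₂) ∈ F q := by
      rw [hqe]; exact Finset.mem_map' _ |>.2 ha
    simp [hF] at this
  have hAC : Disjoint (E₁.image m)
      ((Finset.univ ×ˢ (Finset.univ.powersetCard (r - 1) : Finset (Finset (Fin n₂)))).image G) := by
    rw [Finset.disjoint_left]
    rintro e he he'
    obtain ⟨e₁, he₁, rfl⟩ := Finset.mem_image.1 he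
    obtain ⟨q, hq, hqe⟩ := Finset.mem_image.1 he'
    have hS : q.2.card = r - 1 := (Finset.mem_powersetCard.1 (Finset.mem_product.1 hq).2).2
    have hne : q.2.Nonempty := Finset.card_pos.1 (by omega)
    obtain ⟨w, hw⟩ := hne
    have : (Sum.inr (q.1, w) : Fin n₁ ⊕ Fin n₁ × Fin n₂) ∈ m e₁ := by
      rw [← hqe]
      exact Finset.mem_insert_of_mem (Finset.mem_image_of_mem _ hw)
    simp [hm, Finset.mem_map] at this
  have hBC : Disjoint ((Finset.univ ×ˢ E₂).image F)
      ((Finset.univ ×ˢ (Finset.univ.powersetCard (r - 1) : Finset (Finset (Fin n₂)))).image G) := by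
    rw [Finset.disjoint_left]
    rintro e he he'
    obtain ⟨q, hq, rfl⟩ := Finset.mem_image.1 he
    obtain ⟨p, hp, hpe⟩ := Finset.mem_image.1 he'
    have : (Sum.inl p.1 : Fin n₁ ⊕ Fin n₁ × Fin n₂) ∈ F q := by
      rw [← hpe]; exact Finset.mem_insert_self _ _
    simp [hF] at this
  have hFinj : ∀ q ∈ Finset.univ ×ˢ E₂, ∀ q' ∈ Finset.univ ×ˢ E₂, F q = F q' → q = q' := by
    rintro q hq q' hq' hqq
    have hq2 : q.2 ∈ E₂ := (Finset.mem_product.1 hq).2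
    have hne : q.2.Nonempty := Finset.card_pos.1 (by rw [hu₂ _ hq2]; exact hrpos)
    obtain ⟨w, hw⟩ := hne
    have h1 : (Sum.inr (q.1, w) : Fin n₁ ⊕ Fin n₁ × Fin n₂) ∈ F q' := by
      rw [← hqq]; exact Finset.mem_image_of_mem _ hw
    simp only [hF, Finset.mem_image] at h1
    obtain ⟨w', hw', hww⟩ := h1
    obtain ⟨h11, h12⟩ : q'.1 = q.1 ∧ w' = w := by simpa using hww
    have h2 : q.2.image (fun v => Sum.inr (q.1, v) : Fin n₂ → Fin n₁ ⊕ Fin n₁ × Fin n₂)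
        = q'.2.image (fun v => Sum.inr (q.1, v)) := by
      have := hqq
      simp only [hF] at this
      rw [this, h11]
    have h3 : q.2 = q'.2 := Finset.image_injective (inj_inr n₁ n₂ q.1) h2
    exact Prod.ext (h11.symm) h3
  have hGinj : ∀ q ∈ Finset.univ ×ˢ (Finset.univ.powersetCard (r - 1) : Finset (Finset (Fin n₂))),
      ∀ q' ∈ Finset.univ ×ˢ (Finset.univ.powersetCard (r - 1) : Finset (Finset (Fin n₂))),
      G q = G q' → q = q' := by
    rintro q hq q' hq' hqq
    have h1 : (Sum.inl q.1 : Fin n₁ ⊕ Fin n₁ × Fin n₂) ∈ G q' := by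
      rw [← hqq]; exact Finset.mem_insert_self _ _
    have h11 : q.1 = q'.1 := by
      simp only [hG, Finset.mem_insert, Finset.mem_image] at h1
      rcases h1 with h | ⟨w, _, hw⟩
      · simpa using h
      · exact absurd hw (by simp)
    have hsub : ∀ (a b : Fin n₁ × Finset (Fin n₂)), a.1 = b.1 → G a = G b → a.2 ⊆ b.2 := by
      rintro a b hab hGab s hs
      have : (Sum.inr (a.1, s) : Fin n₁ ⊕ Fin n₁ × Fin n₂) ∈ G b := by
        rw [← hGab]; exact Finset.mem_insert_of_mem (Finset.mem_image_of_mem _ hs)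
      simp only [hG, Finset.mem_insert, Finset.mem_image] at this
      rcases this with h | ⟨w, hw, hww⟩
      · exact absurd h (by simp)
      · obtain ⟨h1, h2⟩ : b.1 = a.1 ∧ w = s := by simpa using hww
        exact h2 ▸ hw
    have h2 : q.2 = q'.2 :=
      Finset.Subset.antisymm (hsub q q' h11 hqq) (hsub q' q h11.symm hqq.symm)
    exact Prod.ext h11 h2
  have hminj : ∀ x ∈ E₁, ∀ y ∈ E₁, m x = m y → x = y := by
    intro a _ b _ hab
    exact Finset.map_injective _ hab
  rw [coronaEdges, Finset.filter_union, Finset.filter_union, Finset.sum_union, Finset.sum_union]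
  · simp only [Finset.sum_filter]
    rw [Finset.sum_image hminj, Finset.sum_image hFinj, Finset.sum_image hGinj,
      Finset.sum_product, Finset.sum_product]
  · exact Disjoint.mono (Finset.filter_subset _ _) (Finset.filter_subset _ _) hAB
  · refine Disjoint.mono (Finset.union_subset_union (Finset.filter_subset _ _)
      (Finset.filter_subset _ _)) (Finset.filter_subset _ _) ?_
    rw [Finset.disjoint_union_left]
    exact ⟨hAC, hBC⟩

lemma star_count (hr : 2 ≤ r) (v : Fin n₂) :
    (((Finset.univ.powersetCard (r-1) : Finset (Finset (Fin n₂)))).filter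
      (fun S => v ∈ S)).card = (n₂ - 1).choose (r - 2) := by
  have hb : (((Finset.univ.powersetCard (r-1) : Finset (Finset (Fin n₂)))).filter
      (fun S => v ∈ S)).card
      = ((Finset.univ.erase v).powersetCard (r-2)).card := by
    refine Finset.card_bij' (fun S _ => S.erase v) (fun T _ => insert v T) ?_ ?_ ?_ ?_
    · intro S hS
      obtain ⟨hS1, hSv⟩ := Finset.mem_filter.1 hS
      obtain ⟨_, hcard⟩ := Finset.mem_powersetCard.1 hS1
      rw [Finset.mem_powersetCard]
      refine ⟨Finset.erase_subset_erase v (Finset.subset_univ S), ?_⟩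
      rw [Finset.card_erase_of_mem hSv, hcard]
      omega
    · intro T hT
      obtain ⟨hT1, hcard⟩ := Finset.mem_powersetCard.1 hT
      have hvT : v ∉ T := fun h => (Finset.mem_erase.1 (hT1 h)).1 rfl
      rw [Finset.mem_filter, Finset.mem_powersetCard]
      refine ⟨⟨Finset.subset_univ _, ?_⟩, Finset.mem_insert_self _ _⟩
      rw [Finset.card_insert_of_notMem hvT, hcard]
      omega
    · intro S hS
      exact Finset.insert_erase (Finset.mem_filter.1 hS).2
    · intro T hT
      obtain ⟨hT1, _⟩ := Finset.mem_powersetCard.1 hT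
      exact Finset.erase_insert (fun h => (Finset.mem_erase.1 (hT1 h)).1 rfl)
  rw [hb, Finset.card_powersetCard, Finset.card_erase_of_mem (Finset.mem_univ v),
    Finset.card_univ, Fintype.card_fin]

lemma hdeg_inl_s16 (hr : 2 ≤ r) (hu₁ : ∀ e ∈ E₁, e.card = r) (hu₂ : ∀ e ∈ E₂, e.card = r)
    (i : Fin n₁) :
    hdegree (coronaEdges r n₁ n₂ E₁ E₂) (Sum.inl i) = hdegree E₁ i + n₂.choose (r-1) := by
  rw [hdegree, Finset.card_eq_sum_ones,
    corona_decomp r n₁ n₂ E₁ E₂ hr hu₁ hu₂ (Sum.inl i) (fun _ => 1)]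
  have hA : (∑ e ∈ E₁, if (Sum.inl i : Fin n₁ ⊕ Fin n₁ × Fin n₂) ∈
      e.map ⟨Sum.inl, Sum.inl_injective⟩ then 1 else 0) = hdegree E₁ i := by
    rw [hdegree, Finset.card_eq_sum_ones, Finset.sum_filter]
    refine Finset.sum_congr rfl (fun e he => ?_)
    congr 1
    simp [Finset.mem_map]
  have hB : (∑ i' : Fin n₁, ∑ e ∈ E₂, if (Sum.inl i : Fin n₁ ⊕ Fin n₁ × Fin n₂) ∈
      e.image (fun v => Sum.inr (i', v)) then 1 else 0) = 0 := by
    refine Finset.sum_eq_zero (fun i' _ => Finset.sum_eq_zero (fun e _ => ?_))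
    rw [if_neg]
    simp
  have hC : (∑ i' : Fin n₁, ∑ S ∈ (Finset.univ.powersetCard (r - 1) : Finset (Finset (Fin n₂))),
      if (Sum.inl i : Fin n₁ ⊕ Fin n₁ × Fin n₂) ∈
        insert (Sum.inl i') (S.image (fun v => Sum.inr (i', v))) then 1 else 0)
      = n₂.choose (r-1) := by
    have hinner : ∀ i' : Fin n₁,
        (∑ S ∈ (Finset.univ.powersetCard (r - 1) : Finset (Finset (Fin n₂))),
          if (Sum.inl i : Fin n₁ ⊕ Fin n₁ × Fin n₂) ∈
            insert (Sum.inl i') (S.image (fun v => Sum.inr (i', v))) then 1 else 0)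
        = if i' = i then n₂.choose (r-1) else 0 := by
      intro i'
      by_cases h : i' = i
      · subst h
        rw [if_pos rfl]
        rw [Finset.sum_congr rfl (fun S _ => if_pos (Finset.mem_insert_self _ _)),
          Finset.sum_const, Finset.card_powersetCard, Finset.card_univ, Fintype.card_fin,
          smul_eq_mul, mul_one]
      · rw [if_neg h]
        refine Finset.sum_eq_zero (fun S _ => ?_)
        rw [if_neg]
        simp only [Finset.mem_insert, Finset.mem_image]
        push_neg
        exact ⟨fun hh => h (Sum.inl_injective hh).symm, fun w _ hw => by simp at hw⟩
    rw [Finset.sum_congr rfl (fun i' _ => hinner i'), Finset.sum_ite_eq' Finset.univ]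
    simp
  rw [hA, hB, hC]
  omega

lemma hdeg_inr_s16 (hr : 2 ≤ r) (hu₁ : ∀ e ∈ E₁, e.card = r) (hu₂ : ∀ e ∈ E₂, e.card = r)
    (i : Fin n₁) (v : Fin n₂) :
    hdegree (coronaEdges r n₁ n₂ E₁ E₂) (Sum.inr (i, v))
      = hdegree E₂ v + (n₂ - 1).choose (r - 2) := by
  rw [hdegree, Finset.card_eq_sum_ones,
    corona_decomp r n₁ n₂ E₁ E₂ hr hu₁ hu₂ (Sum.inr (i, v)) (fun _ => 1)]
  have hA : (∑ e ∈ E₁, if (Sum.inr (i, v) : Fin n₁ ⊕ Fin n₁ × Fin n₂) ∈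
      e.map ⟨Sum.inl, Sum.inl_injective⟩ then 1 else 0) = 0 := by
    refine Finset.sum_eq_zero (fun e _ => ?_)
    rw [if_neg]
    simp [Finset.mem_map]
  have hB : (∑ i' : Fin n₁, ∑ e ∈ E₂, if (Sum.inr (i, v) : Fin n₁ ⊕ Fin n₁ × Fin n₂) ∈
      e.image (fun w => Sum.inr (i', w)) then 1 else 0) = hdegree E₂ v := by
    have hinner : ∀ i' : Fin n₁,
        (∑ e ∈ E₂, if (Sum.inr (i, v) : Fin n₁ ⊕ Fin n₁ × Fin n₂) ∈
          e.image (fun w => Sum.inr (i', w)) then 1 else 0)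
        = if i' = i then hdegree E₂ v else 0 := by
      intro i'
      by_cases h : i' = i
      · subst h
        rw [if_pos rfl, hdegree, Finset.card_eq_sum_ones, Finset.sum_filter]
        refine Finset.sum_congr rfl (fun e _ => ?_)
        congr 1
        simp only [Finset.mem_image, eq_iff_iff]
        constructor
        · rintro ⟨w, hw, hww⟩
          obtain ⟨-, h2⟩ : i' = i' ∧ w = v := by simpa using hww
          exact h2 ▸ hw
        · intro hv; exact ⟨v, hv, rfl⟩
      · rw [if_neg h]
        refine Finset.sum_eq_zero (fun e _ => ?_)
        rw [if_neg]
        simp only [Finset.mem_image]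
        rintro ⟨w, hw, hww⟩
        obtain ⟨h1, -⟩ : i' = i ∧ w = v := by simpa using hww
        exact h h1
    rw [Finset.sum_congr rfl (fun i' _ => hinner i'), Finset.sum_ite_eq' Finset.univ]
    simp
  have hC : (∑ i' : Fin n₁, ∑ S ∈ (Finset.univ.powersetCard (r - 1) : Finset (Finset (Fin n₂))),
      if (Sum.inr (i, v) : Fin n₁ ⊕ Fin n₁ × Fin n₂) ∈
        insert (Sum.inl i') (S.image (fun w => Sum.inr (i', w))) then 1 else 0)
      = (n₂ - 1).choose (r - 2) := by
    have hinner : ∀ i' : Fin n₁,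
        (∑ S ∈ (Finset.univ.powersetCard (r - 1) : Finset (Finset (Fin n₂))),
          if (Sum.inr (i, v) : Fin n₁ ⊕ Fin n₁ × Fin n₂) ∈
            insert (Sum.inl i') (S.image (fun w => Sum.inr (i', w))) then 1 else 0)
        = if i' = i then (n₂ - 1).choose (r - 2) else 0 := by
      intro i'
      by_cases h : i' = i
      · subst h
        rw [if_pos rfl, ← star_count r n₂ hr v, Finset.card_eq_sum_ones, Finset.sum_filter]
        refine Finset.sum_congr rfl (fun S _ => ?_)
        congr 1
        simp only [Finset.mem_insert, Finset.mem_image, eq_iff_iff]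
        constructor
        · rintro (h | ⟨w, hw, hww⟩)
          · exact absurd h (by simp)
          · obtain ⟨-, h2⟩ : i' = i' ∧ w = v := by simpa using hww
            exact h2 ▸ hw
        · intro hv; exact Or.inr ⟨v, hv, rfl⟩
      · rw [if_neg h]
        refine Finset.sum_eq_zero (fun S _ => ?_)
        rw [if_neg]
        simp only [Finset.mem_insert, Finset.mem_image]
        push_neg
        refine ⟨by simp, ?_⟩
        rintro w _ hw
        obtain ⟨h1, -⟩ : i' = i ∧ w = v := by simpa using hw
        exact h h1
    rw [Finset.sum_congr rfl (fun i' _ => hinner i'), Finset.sum_ite_eq' Finset.univ]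
    simp
  rw [hA, hB, hC]
  omega

lemma expand_inl (hr : 2 ≤ r) (hu₁ : ∀ e ∈ E₁, e.card = r) (hu₂ : ∀ e ∈ E₂, e.card = r)
    (X : Fin n₁ ⊕ Fin n₁ × Fin n₂ → ℂ) (i : Fin n₁) :
    ∑ f : Fin (r-1) → (Fin n₁ ⊕ Fin n₁ × Fin n₂),
      lapEntry r (coronaEdges r n₁ n₂ E₁ E₂) (Sum.inl i) f * ∏ k, X (f k)
    = ((hdegree E₁ i : ℂ) + (n₂.choose (r-1) : ℂ)) * X (Sum.inl i) ^ (r-1)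
      - (∑ e ∈ E₁.filter (fun e => i ∈ e), ∏ w ∈ e.erase i, X (Sum.inl w))
      - ∑ S ∈ (Finset.univ.powersetCard (r-1) : Finset (Finset (Fin n₂))),
          ∏ v ∈ S, X (Sum.inr (i, v)) := by
  rw [lap_sum r _ (corona_uniform r n₁ n₂ E₁ E₂ hr hu₁ hu₂) _ X,
    corona_decomp r n₁ n₂ E₁ E₂ hr hu₁ hu₂ (Sum.inl i)
      (fun e => ∏ u ∈ e.erase (Sum.inl i), X u),
    hdeg_inl_s16 r n₁ n₂ E₁ E₂ hr hu₁ hu₂ i]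
  have hA : (∑ e ∈ E₁, if (Sum.inl i : Fin n₁ ⊕ Fin n₁ × Fin n₂) ∈
        e.map ⟨Sum.inl, Sum.inl_injective⟩
      then ∏ u ∈ (e.map ⟨Sum.inl, Sum.inl_injective⟩).erase (Sum.inl i), X u else 0)
      = ∑ e ∈ E₁.filter (fun e => i ∈ e), ∏ w ∈ e.erase i, X (Sum.inl w) := by
    rw [Finset.sum_filter]
    refine Finset.sum_congr rfl (fun e he => ?_)
    have hmem : ((Sum.inl i : Fin n₁ ⊕ Fin n₁ × Fin n₂) ∈
        e.map ⟨Sum.inl, Sum.inl_injective⟩) ↔ i ∈ e := by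
      simp [Finset.mem_map]
    rw [show ((e.map (⟨Sum.inl, Sum.inl_injective⟩ : Fin n₁ ↪ _)).erase (Sum.inl i))
        = (e.erase i).map ⟨Sum.inl, Sum.inl_injective⟩ from
        (Finset.map_erase ⟨Sum.inl, Sum.inl_injective⟩ e i).symm,
      Finset.prod_map]
    by_cases h : i ∈ e
    · rw [if_pos (hmem.2 h), if_pos h]
      rfl
    · rw [if_neg (fun hh => h (hmem.1 hh)), if_neg h]
  have hB : (∑ i' : Fin n₁, ∑ e ∈ E₂, if (Sum.inl i : Fin n₁ ⊕ Fin n₁ × Fin n₂) ∈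
        e.image (fun w => Sum.inr (i', w))
      then ∏ u ∈ (e.image (fun w => Sum.inr (i', w))).erase (Sum.inl i), X u else 0) = 0 := by
    refine Finset.sum_eq_zero (fun i' _ => Finset.sum_eq_zero (fun e _ => ?_))
    rw [if_neg]
    simp
  have hC : (∑ i' : Fin n₁, ∑ S ∈
        (Finset.univ.powersetCard (r - 1) : Finset (Finset (Fin n₂))),
      if (Sum.inl i : Fin n₁ ⊕ Fin n₁ × Fin n₂) ∈
        insert (Sum.inl i') (S.image (fun w => Sum.inr (i', w)))
      then ∏ u ∈ (insert (Sum.inl i') (S.image (fun w => Sum.inr (i', w)))).erase (Sum.inl i), X u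
      else 0)
      = ∑ S ∈ (Finset.univ.powersetCard (r-1) : Finset (Finset (Fin n₂))),
          ∏ v ∈ S, X (Sum.inr (i, v)) := by
    have hinner : ∀ i' : Fin n₁,
        (∑ S ∈ (Finset.univ.powersetCard (r - 1) : Finset (Finset (Fin n₂))),
          if (Sum.inl i : Fin n₁ ⊕ Fin n₁ × Fin n₂) ∈
            insert (Sum.inl i') (S.image (fun w => Sum.inr (i', w)))
          then ∏ u ∈ (insert (Sum.inl i')
            (S.image (fun w => Sum.inr (i', w)))).erase (Sum.inl i), X u
          else 0)
        = if i' = i then (∑ S ∈ (Finset.univ.powersetCard (r-1) : Finset (Finset (Fin n₂))),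
            ∏ v ∈ S, X (Sum.inr (i, v))) else 0 := by
      intro i'
      by_cases h : i' = i
      · subst h
        rw [if_pos rfl]
        refine Finset.sum_congr rfl (fun S _ => ?_)
        rw [if_pos (Finset.mem_insert_self _ _), Finset.erase_insert (by simp),
          Finset.prod_image (fun a _ b _ hab => inj_inr n₁ n₂ i' hab)]
      · rw [if_neg h]
        refine Finset.sum_eq_zero (fun S _ => ?_)
        rw [if_neg]
        simp only [Finset.mem_insert, Finset.mem_image]
        push_neg
        exact ⟨fun hh => h (Sum.inl_injective hh).symm, fun w _ hw => by simp at hw⟩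
    rw [Finset.sum_congr rfl (fun i' _ => hinner i'), Finset.sum_ite_eq' Finset.univ]
    simp
  rw [hA, hB, hC]
  push_cast
  ring

lemma expand_inr (hr : 2 ≤ r) (hu₁ : ∀ e ∈ E₁, e.card = r) (hu₂ : ∀ e ∈ E₂, e.card = r)
    (X : Fin n₁ ⊕ Fin n₁ × Fin n₂ → ℂ) (i : Fin n₁) (v : Fin n₂) :
    ∑ f : Fin (r-1) → (Fin n₁ ⊕ Fin n₁ × Fin n₂),
      lapEntry r (coronaEdges r n₁ n₂ E₁ E₂) (Sum.inr (i, v)) f * ∏ k, X (f k)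
    = ((hdegree E₂ v : ℂ) + ((n₂ - 1).choose (r - 2) : ℂ)) * X (Sum.inr (i, v)) ^ (r-1)
      - (∑ e ∈ E₂.filter (fun e => v ∈ e), ∏ w ∈ e.erase v, X (Sum.inr (i, w)))
      - ∑ S ∈ ((Finset.univ.powersetCard (r-1) : Finset (Finset (Fin n₂)))).filter
          (fun S => v ∈ S),
          X (Sum.inl i) * ∏ w ∈ S.erase v, X (Sum.inr (i, w)) := by
  rw [lap_sum r _ (corona_uniform r n₁ n₂ E₁ E₂ hr hu₁ hu₂) _ X,
    corona_decomp r n₁ n₂ E₁ E₂ hr hu₁ hu₂ (Sum.inr (i, v))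
      (fun e => ∏ u ∈ e.erase (Sum.inr (i, v)), X u),
    hdeg_inr_s16 r n₁ n₂ E₁ E₂ hr hu₁ hu₂ i v]
  have hA : (∑ e ∈ E₁, if (Sum.inr (i, v) : Fin n₁ ⊕ Fin n₁ × Fin n₂) ∈
        e.map ⟨Sum.inl, Sum.inl_injective⟩
      then ∏ u ∈ (e.map ⟨Sum.inl, Sum.inl_injective⟩).erase (Sum.inr (i, v)), X u else 0)
      = 0 := by
    refine Finset.sum_eq_zero (fun e _ => ?_)
    rw [if_neg]
    simp [Finset.mem_map]
  have hB : (∑ i' : Fin n₁, ∑ e ∈ E₂, if (Sum.inr (i, v) : Fin n₁ ⊕ Fin n₁ × Fin n₂) ∈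
        e.image (fun w => Sum.inr (i', w))
      then ∏ u ∈ (e.image (fun w => Sum.inr (i', w))).erase (Sum.inr (i, v)), X u else 0)
      = ∑ e ∈ E₂.filter (fun e => v ∈ e), ∏ w ∈ e.erase v, X (Sum.inr (i, w)) := by
    have hinner : ∀ i' : Fin n₁,
        (∑ e ∈ E₂, if (Sum.inr (i, v) : Fin n₁ ⊕ Fin n₁ × Fin n₂) ∈
          e.image (fun w => Sum.inr (i', w))
        then ∏ u ∈ (e.image (fun w => Sum.inr (i', w))).erase (Sum.inr (i, v)), X u else 0)
        = if i' = i then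
            (∑ e ∈ E₂.filter (fun e => v ∈ e), ∏ w ∈ e.erase v, X (Sum.inr (i, w))) else 0 := by
      intro i'
      by_cases h : i' = i
      · subst h
        rw [if_pos rfl, Finset.sum_filter]
        refine Finset.sum_congr rfl (fun e _ => ?_)
        have hmem : ((Sum.inr (i', v) : Fin n₁ ⊕ Fin n₁ × Fin n₂) ∈
            e.image (fun w => Sum.inr (i', w))) ↔ v ∈ e := by
          constructor
          · rintro hh
            obtain ⟨w, hw, hww⟩ := Finset.mem_image.1 hh
            obtain ⟨-, h2⟩ : i' = i' ∧ w = v := by simpa using hww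
            exact h2 ▸ hw
          · intro hv; exact Finset.mem_image.2 ⟨v, hv, rfl⟩
        by_cases hv : v ∈ e
        · rw [if_pos (hmem.2 hv), if_pos hv,
            show (e.image (fun w => (Sum.inr (i', w) : Fin n₁ ⊕ Fin n₁ × Fin n₂))).erase
              (Sum.inr (i', v)) = (e.erase v).image (fun w => Sum.inr (i', w)) from
              (Finset.image_erase (inj_inr n₁ n₂ i') e v).symm,
            Finset.prod_image (fun a _ b _ hab => inj_inr n₁ n₂ i' hab)]
        · rw [if_neg (fun hh => hv (hmem.1 hh)), if_neg hv]
      · rw [if_neg h]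
        refine Finset.sum_eq_zero (fun e _ => ?_)
        rw [if_neg]
        rintro hh
        obtain ⟨w, hw, hww⟩ := Finset.mem_image.1 hh
        obtain ⟨h1, -⟩ : i' = i ∧ w = v := by simpa using hww
        exact h h1
    rw [Finset.sum_congr rfl (fun i' _ => hinner i'), Finset.sum_ite_eq' Finset.univ]
    simp
  have hC : (∑ i' : Fin n₁, ∑ S ∈
        (Finset.univ.powersetCard (r - 1) : Finset (Finset (Fin n₂))),
      if (Sum.inr (i, v) : Fin n₁ ⊕ Fin n₁ × Fin n₂) ∈
        insert (Sum.inl i') (S.image (fun w => Sum.inr (i', w)))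
      then ∏ u ∈ (insert (Sum.inl i')
        (S.image (fun w => Sum.inr (i', w)))).erase (Sum.inr (i, v)), X u
      else 0)
      = ∑ S ∈ ((Finset.univ.powersetCard (r-1) : Finset (Finset (Fin n₂)))).filter
          (fun S => v ∈ S), X (Sum.inl i) * ∏ w ∈ S.erase v, X (Sum.inr (i, w)) := by
    have hinner : ∀ i' : Fin n₁,
        (∑ S ∈ (Finset.univ.powersetCard (r - 1) : Finset (Finset (Fin n₂))),
          if (Sum.inr (i, v) : Fin n₁ ⊕ Fin n₁ × Fin n₂) ∈
            insert (Sum.inl i') (S.image (fun w => Sum.inr (i', w)))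
          then ∏ u ∈ (insert (Sum.inl i')
            (S.image (fun w => Sum.inr (i', w)))).erase (Sum.inr (i, v)), X u
          else 0)
        = if i' = i then
            (∑ S ∈ ((Finset.univ.powersetCard (r-1) : Finset (Finset (Fin n₂)))).filter
              (fun S => v ∈ S), X (Sum.inl i) * ∏ w ∈ S.erase v, X (Sum.inr (i, w))) else 0 := by
      intro i'
      by_cases h : i' = i
      · subst h
        rw [if_pos rfl, Finset.sum_filter]
        refine Finset.sum_congr rfl (fun S _ => ?_)
        have hmem : ((Sum.inr (i', v) : Fin n₁ ⊕ Fin n₁ × Fin n₂) ∈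
            insert (Sum.inl i') (S.image (fun w => Sum.inr (i', w)))) ↔ v ∈ S := by
          constructor
          · rintro hh
            rcases Finset.mem_insert.1 hh with hh | hh
            · exact absurd hh (by simp)
            · obtain ⟨w, hw, hww⟩ := Finset.mem_image.1 hh
              obtain ⟨-, h2⟩ : i' = i' ∧ w = v := by simpa using hww
              exact h2 ▸ hw
          · intro hv
            exact Finset.mem_insert_of_mem (Finset.mem_image.2 ⟨v, hv, rfl⟩)
        by_cases hv : v ∈ S
        · rw [if_pos (hmem.2 hv), if_pos hv]
          rw [Finset.erase_insert_of_ne (by simp),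
            show (S.image (fun w => (Sum.inr (i', w) : Fin n₁ ⊕ Fin n₁ × Fin n₂))).erase
              (Sum.inr (i', v)) = (S.erase v).image (fun w => Sum.inr (i', w)) from
              (Finset.image_erase (inj_inr n₁ n₂ i') S v).symm,
            Finset.prod_insert (by simp),
            Finset.prod_image (fun a _ b _ hab => inj_inr n₁ n₂ i' hab)]
        · rw [if_neg (fun hh => hv (hmem.1 hh)), if_neg hv]
      · rw [if_neg h]
        refine Finset.sum_eq_zero (fun S _ => ?_)
        rw [if_neg]
        intro hh
        rcases Finset.mem_insert.1 hh with hh | hh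
        · exact absurd hh (by simp)
        · obtain ⟨w, hw, hww⟩ := Finset.mem_image.1 hh
          obtain ⟨h1, -⟩ : i' = i ∧ w = v := by simpa using hww
          exact h h1
    rw [Finset.sum_congr rfl (fun i' _ => hinner i'), Finset.sum_ite_eq' Finset.univ]
    simp
  rw [hA, hB, hC]
  push_cast
  ring

end Corona

/-- Laplacian eigenvalues of the corona `H₁ ∘ H₂`,
with `C = binom(n₂-1, r-2)`. -/
theorem stmt16 (r n₁ n₂ : ℕ) (hr : 2 ≤ r) (hn₂ : r - 1 ≤ n₂)
    (E₁ : Finset (Finset (Fin n₁))) (E₂ : Finset (Finset (Fin n₂)))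
    (hu₁ : ∀ e ∈ E₁, e.card = r) (hu₂ : ∀ e ∈ E₂, e.card = r) :
    (∀ (theta mu : ℂ) (x : Fin n₁ → ℂ),
        IsEigenpair r (lapEntry r E₁) theta x →
        mu ≠ ((n₂ - 1).choose (r - 2) : ℂ) →
        (mu - theta - (n₂.choose (r - 1) : ℂ)) *
            (((n₂ - 1).choose (r - 2) : ℂ) - mu) ^ (r - 1) +
          (n₂.choose (r - 1) : ℂ) * ((n₂ - 1).choose (r - 2) : ℂ) ^ (r - 1) = 0 →
        IsEigenpair r (lapEntry r (coronaEdges r n₁ n₂ E₁ E₂)) mu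
          (Sum.elim x fun p =>
            ((n₂ - 1).choose (r - 2) : ℂ) * x p.1 /
              (((n₂ - 1).choose (r - 2) : ℂ) - mu))) ∧
    (∀ (phi : ℂ) (z : Fin n₂ → ℂ),
        IsEigenpair r (lapEntry r E₂) phi z → IsNonMainVec r z →
        ∀ i : Fin n₁,
          IsEigenpair r (lapEntry r (coronaEdges r n₁ n₂ E₁ E₂))
            (phi + ((n₂ - 1).choose (r - 2) : ℂ))
            (Sum.elim (fun _ : Fin n₁ => (0 : ℂ))
              (fun p => if p.1 = i then z p.2 else 0))) := by
  have hr1 : r - 1 ≠ 0 := by omega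
  have hr2 : r - 1 = (r - 2) + 1 := by omega
  constructor
  · -- Part (a)
    rintro theta mu x ⟨hx0, hxe⟩ hmu hpoly
    set Cc : ℂ := ((n₂ - 1).choose (r - 2) : ℂ) with hCc
    set Bb : ℂ := (n₂.choose (r - 1) : ℂ) with hBb
    have hCmu : Cc - mu ≠ 0 := sub_ne_zero.2 (Ne.symm hmu)
    set X : Fin n₁ ⊕ Fin n₁ × Fin n₂ → ℂ :=
      Sum.elim x (fun p => Cc * x p.1 / (Cc - mu)) with hX
    constructor
    · obtain ⟨i, hi⟩ := Function.ne_iff.1 hx0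
      intro hcon
      exact hi (by simpa [hX] using congrFun hcon (Sum.inl i))
    · rintro (i | ⟨i, v⟩)
      · -- vertex u_i
        rw [expand_inl r n₁ n₂ E₁ E₂ hr hu₁ hu₂ X i]
        have heig : (hdegree E₁ i : ℂ) * x i ^ (r-1)
            - ∑ e ∈ E₁.filter (fun e => i ∈ e), ∏ w ∈ e.erase i, x w
            = theta * x i ^ (r-1) := by
          rw [← lap_sum r E₁ hu₁ i x]
          exact hxe i
        have hXl : X (Sum.inl i) = x i := rfl
        have hXin : ∀ w, X (Sum.inl w) = x w := fun w => rfl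
        have hstar : (∑ S ∈ (Finset.univ.powersetCard (r-1) : Finset (Finset (Fin n₂))),
            ∏ v ∈ S, X (Sum.inr (i, v)))
            = Bb * (Cc * x i / (Cc - mu)) ^ (r-1) := by
          have : ∀ S ∈ (Finset.univ.powersetCard (r-1) : Finset (Finset (Fin n₂))),
              (∏ v ∈ S, X (Sum.inr (i, v))) = (Cc * x i / (Cc - mu)) ^ (r-1) := by
            intro S hS
            have hcard : S.card = r - 1 := (Finset.mem_powersetCard.1 hS).2
            have hcn : (∏ w ∈ S, X (Sum.inr (i, w)))
                = ∏ _w ∈ S, (Cc * x i / (Cc - mu)) :=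
              Finset.prod_congr rfl (fun w _ => rfl)
            rw [hcn, Finset.prod_const, hcard]
          rw [Finset.sum_congr rfl this, Finset.sum_const, Finset.card_powersetCard,
            Finset.card_univ, Fintype.card_fin, nsmul_eq_mul, hBb]
        rw [hstar, hXl, Finset.sum_congr rfl (fun e _ =>
          Finset.prod_congr rfl (fun w _ => hXin w))]
        have hkey : (theta + Bb - mu) * (Cc - mu) ^ (r-1) = Bb * Cc ^ (r-1) := by
          linear_combination -hpoly
        have hBval : Bb * (Cc * x i / (Cc - mu)) ^ (r-1) = (theta + Bb - mu) * x i ^ (r-1) := by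
          rw [div_pow, mul_pow, mul_div_assoc']
          rw [div_eq_iff (pow_ne_zero _ hCmu)]
          linear_combination -x i ^ (r-1) * hkey
        rw [hBval]
        linear_combination heig
      · -- copy vertex
        rw [expand_inr r n₁ n₂ E₁ E₂ hr hu₁ hu₂ X i v]
        set y : ℂ := Cc * x i / (Cc - mu) with hy
        have hXr : ∀ w, X (Sum.inr (i, w)) = y := fun w => rfl
        have hXl : X (Sum.inl i) = x i := rfl
        have hcopy : (∑ e ∈ E₂.filter (fun e => v ∈ e), ∏ w ∈ e.erase v, X (Sum.inr (i, w)))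
            = (hdegree E₂ v : ℂ) * y ^ (r-1) := by
          have : ∀ e ∈ E₂.filter (fun e => v ∈ e),
              (∏ w ∈ e.erase v, X (Sum.inr (i, w))) = y ^ (r-1) := by
            intro e he
            have hcard : (e.erase v).card = r - 1 := by
              rw [Finset.card_erase_of_mem (Finset.mem_filter.1 he).2,
                hu₂ e (Finset.mem_filter.1 he).1]
            rw [Finset.prod_congr rfl (fun w _ => hXr w), Finset.prod_const, hcard]
          rw [Finset.sum_congr rfl this, Finset.sum_const, nsmul_eq_mul, hdegree]
        have hstar : (∑ S ∈ ((Finset.univ.powersetCard (r-1) :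
              Finset (Finset (Fin n₂)))).filter (fun S => v ∈ S),
            X (Sum.inl i) * ∏ w ∈ S.erase v, X (Sum.inr (i, w)))
            = Cc * (x i * y ^ (r-2)) := by
          have : ∀ S ∈ ((Finset.univ.powersetCard (r-1) :
              Finset (Finset (Fin n₂)))).filter (fun S => v ∈ S),
              X (Sum.inl i) * (∏ w ∈ S.erase v, X (Sum.inr (i, w))) = x i * y ^ (r-2) := by
            intro S hS
            have hcard : (S.erase v).card = r - 2 := by
              rw [Finset.card_erase_of_mem (Finset.mem_filter.1 hS).2,
                (Finset.mem_powersetCard.1 (Finset.mem_filter.1 hS).1).2]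
              omega
            rw [hXl, Finset.prod_congr rfl (fun w _ => hXr w), Finset.prod_const, hcard]
          rw [Finset.sum_congr rfl this, Finset.sum_const, star_count r n₂ hr v,
            nsmul_eq_mul, hCc]
        rw [hcopy, hstar, hXr v]
        have hkey : (Cc - mu) * y = Cc * x i := mul_div_cancel₀ _ hCmu
        have hyy : y ^ (r - 1) = y ^ (r - 2) * y := by rw [hr2, pow_succ]
        rw [hyy]
        linear_combination y ^ (r-2) * hkey
  · -- Part (b)
    rintro phi z ⟨hz0, hze⟩ hznm i
    set X : Fin n₁ ⊕ Fin n₁ × Fin n₂ → ℂ :=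
      Sum.elim (fun _ : Fin n₁ => (0 : ℂ)) (fun p => if p.1 = i then z p.2 else 0) with hX
    constructor
    · obtain ⟨v, hv⟩ := Function.ne_iff.1 hz0
      intro hcon
      have : X (Sum.inr (i, v)) = 0 := by simpa using congrFun hcon (Sum.inr (i, v))
      rw [hX] at this
      simp only [Sum.elim_inr, if_pos rfl] at this
      exact hv (by simpa using this)
    · rintro (i' | ⟨i', v⟩)
      · -- vertex u_{i'}
        rw [expand_inl r n₁ n₂ E₁ E₂ hr hu₁ hu₂ X i']
        have hXl : X (Sum.inl i') = 0 := rfl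
        have hedge : (∑ e ∈ E₁.filter (fun e => i' ∈ e), ∏ w ∈ e.erase i', X (Sum.inl w))
            = 0 := by
          refine Finset.sum_eq_zero (fun e he => ?_)
          have hne : (e.erase i').Nonempty := by
            rw [← Finset.card_pos, Finset.card_erase_of_mem (Finset.mem_filter.1 he).2,
              hu₁ e (Finset.mem_filter.1 he).1]
            omega
          obtain ⟨w, hw⟩ := hne
          exact Finset.prod_eq_zero hw rfl
        have hstar : (∑ S ∈ (Finset.univ.powersetCard (r-1) : Finset (Finset (Fin n₂))),
            ∏ v ∈ S, X (Sum.inr (i', v))) = 0 := by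
          by_cases h : i' = i
          · subst h
            have : ∀ S ∈ (Finset.univ.powersetCard (r-1) : Finset (Finset (Fin n₂))),
                (∏ v ∈ S, X (Sum.inr (i', v))) = ∏ v ∈ S, z v := by
              intro S _
              exact Finset.prod_congr rfl (fun w _ => by simp [hX])
            rw [Finset.sum_congr rfl this]
            exact hznm
          · refine Finset.sum_eq_zero (fun S hS => ?_)
            have hne : S.Nonempty := by
              rw [← Finset.card_pos, (Finset.mem_powersetCard.1 hS).2]
              omega
            obtain ⟨w, hw⟩ := hne
            refine Finset.prod_eq_zero hw ?_
            simp [hX, h]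
        rw [hXl, hedge, hstar, zero_pow hr1]
        ring
      · -- copy vertex (i', v)
        rw [expand_inr r n₁ n₂ E₁ E₂ hr hu₁ hu₂ X i' v]
        have hXl : X (Sum.inl i') = 0 := rfl
        by_cases h : i' = i
        · subst h
          have hXr : ∀ w, X (Sum.inr (i', w)) = z w := fun w => by simp [hX]
          have heig : (hdegree E₂ v : ℂ) * z v ^ (r-1)
              - ∑ e ∈ E₂.filter (fun e => v ∈ e), ∏ w ∈ e.erase v, z w
              = phi * z v ^ (r-1) := by
            rw [← lap_sum r E₂ hu₂ v z]
            exact hze v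
          have hstar : (∑ S ∈ ((Finset.univ.powersetCard (r-1) :
                Finset (Finset (Fin n₂)))).filter (fun S => v ∈ S),
              X (Sum.inl i') * ∏ w ∈ S.erase v, X (Sum.inr (i', w))) = 0 := by
            refine Finset.sum_eq_zero (fun S _ => ?_)
            rw [hXl, zero_mul]
          rw [hstar, hXr v, Finset.sum_congr rfl (fun e _ =>
            Finset.prod_congr rfl (fun w _ => hXr w))]
          linear_combination heig
        · have hXr : ∀ w, X (Sum.inr (i', w)) = 0 := fun w => by simp [hX, h]
          have hcopy : (∑ e ∈ E₂.filter (fun e => v ∈ e),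
              ∏ w ∈ e.erase v, X (Sum.inr (i', w))) = 0 := by
            refine Finset.sum_eq_zero (fun e he => ?_)
            have hne : (e.erase v).Nonempty := by
              rw [← Finset.card_pos, Finset.card_erase_of_mem (Finset.mem_filter.1 he).2,
                hu₂ e (Finset.mem_filter.1 he).1]
              omega
            obtain ⟨w, hw⟩ := hne
            exact Finset.prod_eq_zero hw (hXr w)
          have hstar : (∑ S ∈ ((Finset.univ.powersetCard (r-1) :
                Finset (Finset (Fin n₂)))).filter (fun S => v ∈ S),
              X (Sum.inl i') * ∏ w ∈ S.erase v, X (Sum.inr (i', w))) = 0 := by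
            refine Finset.sum_eq_zero (fun S _ => ?_)
            rw [hXl, zero_mul]
          rw [hcopy, hstar, hXr v, zero_pow hr1]
          ring
end
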